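/- Let Y be a discrete random variable and S a finite set of discrete random variables with Y ∉ S, and let E ⊆ S be the set of essential variables for Y. If E is a Markov blanket of Y within S, then E is a Markov boundary of Y within S and it is the unique Markov boundary of Y within S. -/

import Mathlib

open scoped BigOperators

noncomputable section

/-- `p` is a probability mass function on the finite type `Ω`. -/
def IsDist {Ω : Type*} [Fintype Ω] (p : Ω → ℝ) : Prop :=
  (∀ w, 0 ≤ p w) ∧ ∑ w, p w = 1

/-- Total variation distance between two distributions on the same finite type. -/
def tvDist {Ω : Type*} [Fintype Ω] (p q : Ω → ℝ) : ℝ :=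
  (∑ w, |p w - q w|) / 2

variable {ι : Type*} [Fintype ι] [DecidableEq ι]
variable {α : ι → Type*} [∀ i, Fintype (α i)] [∀ i, DecidableEq (α i)]

/-- Marginal probability, under joint pmf `p`, of the event that the variables in the
collection `A` take the values prescribed by the configuration `x`. -/
def margProb (p : (∀ i, α i) → ℝ) (A : Finset ι) (x : ∀ i, α i) : ℝ :=
  ∑ w : ∀ i, α i, if ∀ i ∈ A, w i = x i then p w else 0

/-- Conditional independence of the collections `A` and `B` given the collection `C`:
`f(a, b | c) = f(a | c) f(b | c)` whenever `f(c) > 0` (stated in multiplied-out form). -/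
def CondIndep (p : (∀ i, α i) → ℝ) (A B C : Finset ι) : Prop :=
  ∀ x : ∀ i, α i, 0 < margProb p C x →
    margProb p (A ∪ B ∪ C) x * margProb p C x =
      margProb p (A ∪ C) x * margProb p (B ∪ C) x

/-- `M` is a Markov blanket of the variable `y` within the collection `T`. -/
def MarkovBlanket (p : (∀ i, α i) → ℝ) (y : ι) (T M : Finset ι) : Prop :=
  M ⊆ T ∧ CondIndep p {y} (T \ M) M

/-- `M` is a Markov boundary of `y` within `T`: a Markov blanket no proper subset of
which is a Markov blanket. -/
def MarkovBoundary (p : (∀ i, α i) → ℝ) (y : ι) (T M : Finset ι) : Prop :=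
  MarkovBlanket p y T M ∧ ∀ M' ⊂ M, ¬ MarkovBlanket p y T M'

/-- Mutual information between the collections `A` and `B`
(with the convention `0 · log(junk) = 0` on zero-probability terms). -/
def MI (p : (∀ i, α i) → ℝ) (A B : Finset ι) : ℝ :=
  ∑ w : ∀ i, α i, p w *
    Real.log (margProb p (A ∪ B) w / (margProb p A w * margProb p B w))

/-- Conditional mutual information between collections `A` and `B` given `C`
(with the convention `0 · log(junk) = 0` on zero-probability terms). -/
def CMI (p : (∀ i, α i) → ℝ) (A B C : Finset ι) : ℝ :=
  ∑ w : (∀ i, α i), p w *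
    Real.log ((margProb p (A ∪ B ∪ C) w * margProb p C w) /
      (margProb p (A ∪ C) w * margProb p (B ∪ C) w))


/-!
If a Markov blanket `M` of `y` within `S` misses some `W ∈ S`, weak union turns
`y ⊥ S \ M | M` into `y ⊥ W | S \ {W}`, so `W` is not essential. Hence every Markov blanket
contains `E`: no proper subset of `E` is a blanket, and a Markov boundary `M ⊇ E` cannot be a
proper superset of the blanket `E`. Weak union comes from decomposition, which is the defining
identity of conditional independence summed over the values of the variables being dropped.
-/

section

variable {p : (∀ i, α i) → ℝ}

lemma margProb_congr {U : Finset ι} {z x : ∀ i, α i} (hzx : ∀ i ∈ U, z i = x i) :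
    margProb p U z = margProb p U x := by
  refine Finset.sum_congr rfl fun w _ => if_congr ?_ rfl rfl
  exact forall₂_congr fun i hi => by rw [hzx i hi]

lemma margProb_anti (hp : ∀ w, 0 ≤ p w) {U V : Finset ι} (hUV : U ⊆ V) (x : ∀ i, α i) :
    margProb p V x ≤ margProb p U x := by
  refine Finset.sum_le_sum fun w _ => ?_
  split_ifs with hV hU
  exacts [le_rfl, absurd (fun i hi => hV i (hUV hi)) hU, hp w, le_rfl]

lemma sum_margProb_eq_margProb_sdiff {F U : Finset ι} (hFU : F ⊆ U) (x : ∀ i, α i) :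
    ∑ z ∈ Finset.univ.filter (fun z => ∀ i ∉ F, z i = x i), margProb p U z =
      margProb p (U \ F) x := by
  unfold margProb
  rw [Finset.sum_comm]
  refine Finset.sum_congr rfl fun w _ => ?_
  -- the only configuration agreeing with `x` off `F` and with `w` on `U`
  set z₀ : ∀ i, α i := fun i => if i ∈ F then w i else x i with hz₀
  have hz₀_mem : z₀ ∈ Finset.univ.filter (fun z => ∀ i ∉ F, z i = x i) :=
    Finset.mem_filter.2 ⟨Finset.mem_univ _, fun i hi => if_neg hi⟩
  rw [Finset.sum_eq_single_of_mem z₀ hz₀_mem]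
  · refine if_congr ⟨fun h i hi => ?_, fun h i hi => ?_⟩ rfl rfl
    · obtain ⟨hiU, hiF⟩ := Finset.mem_sdiff.1 hi
      simpa [hz₀, hiF] using h i hiU
    · by_cases hiF : i ∈ F
      · simp [hz₀, hiF]
      · simpa [hz₀, hiF] using h i (Finset.mem_sdiff.2 ⟨hi, hiF⟩)
  · intro z hz hne
    refine if_neg fun h => hne (funext fun i => ?_)
    by_cases hiF : i ∈ F
    · simp [hz₀, hiF, h i (hFU hiF)]
    · simp [hz₀, hiF, (Finset.mem_filter.1 hz).2 i hiF]

variable {X A B C : Finset ι}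

lemma CondIndep.decomposition (hAX : Disjoint A X) (hAB : Disjoint A B) (hAC : Disjoint A C)
    (h : CondIndep p X (A ∪ B) C) : CondIndep p X B C := by
  intro x hC
  have hAXC : Disjoint A (X ∪ C) := Finset.disjoint_union_right.2 ⟨hAX, hAC⟩
  have hpointwise : ∀ z ∈ Finset.univ.filter (fun z => ∀ i ∉ A, z i = x i),
      margProb p (X ∪ (A ∪ B) ∪ C) z * margProb p C x =
        margProb p (X ∪ C) x * margProb p (A ∪ B ∪ C) z := by
    intro z hz
    have hzx : ∀ i, i ∉ A → z i = x i := (Finset.mem_filter.1 hz).2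
    have hCz : margProb p C z = margProb p C x :=
      margProb_congr fun i hi => hzx i (Finset.disjoint_right.1 hAC hi)
    have hXCz : margProb p (X ∪ C) z = margProb p (X ∪ C) x :=
      margProb_congr fun i hi => hzx i (Finset.disjoint_right.1 hAXC hi)
    rw [← hCz, ← hXCz]
    exact h z (hCz ▸ hC)
  have hsum := Finset.sum_congr rfl hpointwise
  rw [← Finset.sum_mul, ← Finset.mul_sum,
    sum_margProb_eq_margProb_sdiff (by intro i; simp +contextual) x,
    sum_margProb_eq_margProb_sdiff (by intro i; simp +contextual) x] at hsum
  have hXB : (X ∪ (A ∪ B) ∪ C) \ A = X ∪ B ∪ C := by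
    rw [show X ∪ (A ∪ B) ∪ C = A ∪ (X ∪ B ∪ C) by ac_rfl,
      Finset.union_sdiff_cancel_left (by simp only [Finset.disjoint_union_right]; tauto)]
  have hB : (A ∪ B ∪ C) \ A = B ∪ C := by
    rw [Finset.union_assoc,
      Finset.union_sdiff_cancel_left (Finset.disjoint_union_right.2 ⟨hAB, hAC⟩)]
  rwa [hXB, hB] at hsum

lemma CondIndep.weak_union (hp : ∀ w, 0 ≤ p w) (hAX : Disjoint A X) (hAB : Disjoint A B)
    (hAC : Disjoint A C) (h : CondIndep p X (A ∪ B) C) : CondIndep p X A (B ∪ C) := by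
  intro x hBC
  have hC : 0 < margProb p C x := hBC.trans_le (margProb_anti hp Finset.subset_union_right x)
  have hXAB := h x hC
  have hXB := h.decomposition hAX hAB hAC x hC
  rw [show X ∪ A ∪ (B ∪ C) = X ∪ (A ∪ B) ∪ C by ac_rfl,
    show X ∪ (B ∪ C) = X ∪ B ∪ C by ac_rfl, show A ∪ (B ∪ C) = A ∪ B ∪ C by ac_rfl]
  apply mul_left_cancel₀ hC.ne'
  linear_combination margProb p (B ∪ C) x * hXAB - margProb p (A ∪ B ∪ C) x * hXB

lemma MarkovBlanket.condIndep_erase (hp : ∀ w, 0 ≤ p w) {y : ι} {T M : Finset ι} {W : ι}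
    (hM : MarkovBlanket p y T M) (hyT : y ∉ T) (hWT : W ∈ T) (hWM : W ∉ M) :
    CondIndep p {y} {W} (T.erase W) := by
  have hsplit : {W} ∪ (T \ M).erase W = T \ M := by
    rw [← Finset.insert_eq, Finset.insert_erase (Finset.mem_sdiff.2 ⟨hWT, hWM⟩)]
  have hrest : (T \ M).erase W ∪ M = T.erase W := by
    rw [Finset.erase_eq, Finset.erase_eq, sdiff_right_comm, Finset.sdiff_union_of_subset
      (Finset.subset_sdiff.2 ⟨hM.1, Finset.disjoint_singleton_right.2 hWM⟩)]
  have hWy : W ≠ y := by rintro rfl; exact hyT hWT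
  rw [← hrest]
  refine CondIndep.weak_union hp (Finset.disjoint_singleton.2 hWy)
    (Finset.disjoint_singleton_left.2 (Finset.notMem_erase W _))
    (Finset.disjoint_singleton_left.2 hWM) ?_
  rw [hsplit]
  exact hM.2

end

variable [∀ i, Nonempty (α i)]

/-- if the set `E` of essential variables for `Y` is a Markov blanket of
`Y` within `S`, then `E` is a Markov boundary, and it is the unique one. -/
theorem essential_blanket_is_unique_markov_boundary
    (p : (∀ i, α i) → ℝ) (hp : IsDist p)
    (y : ι) (S : Finset ι) (hyS : y ∉ S)
    (E : Finset ι)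
    (hE : ∀ W, W ∈ E ↔ W ∈ S ∧ ¬ CondIndep p {y} {W} (S.erase W))
    (hbl : MarkovBlanket p y S E) :
    MarkovBoundary p y S E ∧ ∀ M, MarkovBoundary p y S M → M = E := by
  have hE_subset : ∀ M, MarkovBlanket p y S M → E ⊆ M := by
    intro M hM W hWE
    obtain ⟨hWS, hW_essential⟩ := (hE W).1 hWE
    by_contra hWM
    exact hW_essential (hM.condIndep_erase hp.1 hyS hWS hWM)
  refine ⟨⟨hbl, fun M hME hM => hME.2 (hE_subset M hM)⟩, fun M hM => ?_⟩
  rcases (hE_subset M hM.1).eq_or_ssubset with hEM | hEM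
  · exact hEM.symm
  · exact absurd hbl (hM.2 E hEM)

end
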